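/- arXiv:2001.11376 — 8 statements merged into one kernel-verified Lean document; each statement's English description precedes it below -/
import Mathlib

section
/- Let M > 0, let I ⊆ ℝ be an interval, and let γ = (t, x) : I → ℝ × ℝ³ be a C¹ curve with 0 < ‖x(s)‖ < 2M and Q_M(t'(s), x'(s), x(s)) < 0 for every s ∈ I (a timelike curve in the interior Schwarzschild spacetime). Then ⟨x(s), x'(s)⟩ ≠ 0 for every s ∈ I, the sign of ⟨x(s), x'(s)⟩ is constant on I, and the radial function s ↦ ‖x(s)‖ is strictly monotone on I. -/
/-- The Schwarzschild quadratic form of mass `M`, evaluated on a velocity `(t', x')`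
at a point with spatial part `x` (where `0 < ‖x‖ < 2M`):
`Q_M(t',x',x) := (2M/‖x‖ − 1)·t'² + ‖x'‖² − (2M/((2M − ‖x‖)·‖x‖²))·⟨x,x'⟩²`. -/
noncomputable def QM (M : ℝ) (t' : ℝ) (x' x : EuclideanSpace ℝ (Fin 3)) : ℝ :=
  (2 * M / ‖x‖ - 1) * t' ^ 2 + ‖x'‖ ^ 2
    - (2 * M / ((2 * M - ‖x‖) * ‖x‖ ^ 2)) * (inner ℝ x x' : ℝ) ^ 2

open RealInnerProductSpace

/- Inside the horizon the coefficient of `t'²` is positive, so a velocity orthogonal to the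
position vector has `Q_M ≥ 0`. -/
theorem inner_ne_zero_of_QM_neg {M t' : ℝ} {x x' : EuclideanSpace ℝ (Fin 3)}
    (hx₀ : 0 < ‖x‖) (hxM : ‖x‖ < 2 * M) (hQ : QM M t' x' x < 0) : ⟪x, x'⟫ ≠ 0 := by
  intro h
  have hcoef : 0 < 2 * M / ‖x‖ - 1 := by
    linarith [(one_lt_div hx₀).mpr hxM]
  rw [QM, h] at hQ
  nlinarith [mul_nonneg hcoef.le (sq_nonneg t'), sq_nonneg ‖x'‖]

theorem IsPreconnected.forall_pos_or_forall_neg {X : Type*} [TopologicalSpace X] {s : Set X}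
    (hs : IsPreconnected s) {f : X → ℝ} (hf : ContinuousOn f s) (hne : ∀ a ∈ s, f a ≠ 0) :
    (∀ a ∈ s, 0 < f a) ∨ (∀ a ∈ s, f a < 0) := by
  by_contra! ⟨⟨a, ha, hfa⟩, ⟨b, hb, hfb⟩⟩
  obtain ⟨c, hc, hfc⟩ := hs.intermediate_value ha hb hf ⟨hfa, hfb⟩
  exact hne c hc hfc

section Radius

variable {E : Type*} [NormedAddCommGroup E] [InnerProductSpace ℝ E]
  {I : Set ℝ} {x x' : ℝ → E}

theorem strictMonoOn_norm_of_inner_deriv_pos (hI : Convex ℝ I)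
    (hx : ∀ s ∈ I, HasDerivWithinAt x (x' s) I s) (hpos : ∀ s ∈ I, 0 < ⟪x s, x' s⟫) :
    StrictMonoOn (‖x ·‖) I := by
  have hxc : ContinuousOn x I := fun s hs => (hx s hs).continuousWithinAt
  have hsq : StrictMonoOn (‖x ·‖ ^ 2) I :=
    strictMonoOn_of_hasDerivWithinAt_pos hI (hxc.norm.pow 2)
      (fun s hs => ((hx s (interior_subset hs)).norm_sq).mono interior_subset)
      (fun s hs => by linarith [hpos s (interior_subset hs)])
  exact fun a ha b hb hab => lt_of_pow_lt_pow_left₀ 2 (norm_nonneg _) (hsq ha hb hab)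

theorem strictAntiOn_norm_of_inner_deriv_neg (hI : Convex ℝ I)
    (hx : ∀ s ∈ I, HasDerivWithinAt x (x' s) I s) (hneg : ∀ s ∈ I, ⟪x s, x' s⟫ < 0) :
    StrictAntiOn (‖x ·‖) I := by
  have hxc : ContinuousOn x I := fun s hs => (hx s hs).continuousWithinAt
  have hsq : StrictAntiOn (‖x ·‖ ^ 2) I :=
    strictAntiOn_of_hasDerivWithinAt_neg hI (hxc.norm.pow 2)
      (fun s hs => ((hx s (interior_subset hs)).norm_sq).mono interior_subset)
      (fun s hs => by linarith [hneg s (interior_subset hs)])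
  exact fun a ha b hb hab => lt_of_pow_lt_pow_left₀ 2 (norm_nonneg _) (hsq ha hb hab)

end Radius

theorem timelike_radial_strictly_monotone_general (M : ℝ)
    (I : Set ℝ) (hI : I.OrdConnected)
    (t' : ℝ → ℝ) (x x' : ℝ → EuclideanSpace ℝ (Fin 3))
    (hx : ∀ s ∈ I, HasDerivWithinAt x (x' s) I s)
    (hx'c : ContinuousOn x' I)
    (hr : ∀ s ∈ I, 0 < ‖x s‖ ∧ ‖x s‖ < 2 * M)
    (htl : ∀ s ∈ I, QM M (t' s) (x' s) (x s) < 0) :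
    (∀ s ∈ I, (inner ℝ (x s) (x' s) : ℝ) ≠ 0) ∧
    ((∀ s ∈ I, (0 : ℝ) < inner ℝ (x s) (x' s)) ∨ (∀ s ∈ I, (inner ℝ (x s) (x' s) : ℝ) < 0)) ∧
    (StrictMonoOn (fun s => ‖x s‖) I ∨ StrictAntiOn (fun s => ‖x s‖) I) := by
  have hne : ∀ s ∈ I, ⟪x s, x' s⟫ ≠ 0 := fun s hs =>
    inner_ne_zero_of_QM_neg (hr s hs).1 (hr s hs).2 (htl s hs)
  have hxc : ContinuousOn x I := fun s hs => (hx s hs).continuousWithinAt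
  have hsign := hI.isPreconnected.forall_pos_or_forall_neg (hxc.inner hx'c) hne
  refine ⟨hne, hsign, ?_⟩
  rcases hsign with hpos | hneg
  · exact .inl (strictMonoOn_norm_of_inner_deriv_pos hI.convex hx hpos)
  · exact .inr (strictAntiOn_norm_of_inner_deriv_neg hI.convex hx hneg)

/-- Let `M > 0`, let `I ⊆ ℝ` be an interval, and let `γ = (t, x) : I → ℝ × ℝ³` be a
C¹ curve with `0 < ‖x(s)‖ < 2M` and `Q_M(t'(s), x'(s), x(s)) < 0` for every `s ∈ I`
(a timelike curve in the interior Schwarzschild spacetime). Then `⟨x(s), x'(s)⟩ ≠ 0`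
for every `s ∈ I`, the sign of `⟨x(s), x'(s)⟩` is constant on `I`, and the radial
function `s ↦ ‖x(s)‖` is strictly monotone on `I`. -/
theorem timelike_radial_strictly_monotone (M : ℝ) (hM : 0 < M)
    (I : Set ℝ) (hI : I.OrdConnected)
    (t t' : ℝ → ℝ) (x x' : ℝ → EuclideanSpace ℝ (Fin 3))
    (ht : ∀ s ∈ I, HasDerivWithinAt t (t' s) I s)
    (hx : ∀ s ∈ I, HasDerivWithinAt x (x' s) I s)
    (ht'c : ContinuousOn t' I) (hx'c : ContinuousOn x' I)
    (hr : ∀ s ∈ I, 0 < ‖x s‖ ∧ ‖x s‖ < 2 * M)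
    (htl : ∀ s ∈ I, QM M (t' s) (x' s) (x s) < 0) :
    (∀ s ∈ I, (inner ℝ (x s) (x' s) : ℝ) ≠ 0) ∧
    ((∀ s ∈ I, (0 : ℝ) < inner ℝ (x s) (x' s)) ∨ (∀ s ∈ I, (inner ℝ (x s) (x' s) : ℝ) < 0)) ∧
    (StrictMonoOn (fun s => ‖x s‖) I ∨ StrictAntiOn (fun s => ‖x s‖) I) :=
  timelike_radial_strictly_monotone_general M I hI t' x x' hx hx'c hr htl
end

section
/- Let M > 0 and r₀ ∈ (0, 2M). If γ = (t, x) : [0,1] → ℝ × ℝ³ is a C¹ curve with 0 < ‖x(s)‖ < 2M and Q_M(t'(s), x'(s), x(s)) < 0 for every s ∈ [0,1], and ‖x(0)‖ = r₀, then ‖x(1)‖ ≠ r₀. In particular, no timelike curve of the interior Schwarzschild spacetime meets the hypersurface S_{r₀} := {(t,x) ∈ M_Sch : ‖x‖ = r₀} in two distinct points, i.e. S_{r₀} is achronal. -/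
/-!
Inside the horizon the coefficient `2M/‖x‖ - 1` of `t'²` in `Q_M` is positive, so `Q_M` is
nonnegative on velocities with `⟨x, x'⟩ = 0`. Along a timelike curve the derivative
`2⟨x, x'⟩` of `‖x‖²` therefore never vanishes, and by Rolle's theorem `‖x‖` cannot take the
same value at two parameters.
-/

open Set

theorem QM_nonneg_of_inner_eq_zero {M t' : ℝ} {x' x : EuclideanSpace ℝ (Fin 3)}
    (hx₀ : 0 < ‖x‖) (hx₂ : ‖x‖ < 2 * M) (hinner : inner ℝ x x' = 0) : 0 ≤ QM M t' x' x := by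
  have hcoeff : 0 < 2 * M / ‖x‖ - 1 := sub_pos.mpr ((one_lt_div hx₀).mpr hx₂)
  rw [QM, hinner, zero_pow two_ne_zero, mul_zero, sub_zero]
  positivity

theorem norm_ne_norm_of_inner_deriv_ne_zero {F : Type*} [NormedAddCommGroup F]
    [InnerProductSpace ℝ F] {f f' : ℝ → F} {a b : ℝ} (hab : a < b)
    (hf : ∀ s ∈ Icc a b, HasDerivWithinAt f (f' s) (Icc a b) s)
    (hinner : ∀ s ∈ Ioo a b, inner ℝ (f s) (f' s) ≠ 0) :
    ‖f b‖ ≠ ‖f a‖ := by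
  intro hba
  have hcont : ContinuousOn (‖f ·‖ ^ 2) (Icc a b) :=
    fun s hs => (hf s hs).norm_sq.continuousWithinAt
  have hderiv : ∀ s ∈ Ioo a b, HasDerivAt (‖f ·‖ ^ 2) (2 * inner ℝ (f s) (f' s)) s :=
    fun s hs => (hf s (Ioo_subset_Icc_self hs)).norm_sq.hasDerivAt (Icc_mem_nhds hs.1 hs.2)
  obtain ⟨c, hc, hc0⟩ := exists_hasDerivAt_eq_zero hab hcont (by simp only [hba]) hderiv
  exact hinner c hc (by simpa using hc0)

theorem hypersurface_achronal_general (M : ℝ) (r₀ : ℝ)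
    (t' : ℝ → ℝ) (x x' : ℝ → EuclideanSpace ℝ (Fin 3))
    (hx : ∀ s ∈ Set.Icc (0 : ℝ) 1, HasDerivWithinAt x (x' s) (Set.Icc 0 1) s)
    (hr : ∀ s ∈ Set.Icc (0 : ℝ) 1, 0 < ‖x s‖ ∧ ‖x s‖ < 2 * M)
    (htl : ∀ s ∈ Set.Icc (0 : ℝ) 1, QM M (t' s) (x' s) (x s) < 0)
    (hx0 : ‖x 0‖ = r₀) :
    ‖x 1‖ ≠ r₀ := by
  have hinner : ∀ s ∈ Ioo (0 : ℝ) 1, inner ℝ (x s) (x' s) ≠ 0 := by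
    intro s hs hzero
    obtain ⟨hx₀, hx₂⟩ := hr s (Ioo_subset_Icc_self hs)
    exact (htl s (Ioo_subset_Icc_self hs)).not_ge (QM_nonneg_of_inner_eq_zero hx₀ hx₂ hzero)
  exact hx0 ▸ norm_ne_norm_of_inner_deriv_ne_zero one_pos hx hinner

/-- Let `M > 0` and `r₀ ∈ (0, 2M)`. If `γ = (t, x) : [0,1] → ℝ × ℝ³` is a C¹ curve with
`0 < ‖x(s)‖ < 2M` and `Q_M(t'(s), x'(s), x(s)) < 0` for every `s ∈ [0,1]`, and
`‖x(0)‖ = r₀`, then `‖x(1)‖ ≠ r₀`. In particular, no timelike curve of the interior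
Schwarzschild spacetime meets the hypersurface `S_{r₀}` in two distinct points,
i.e. `S_{r₀}` is achronal. -/
theorem hypersurface_achronal (M : ℝ) (hM : 0 < M) (r₀ : ℝ)
    (hr₀ : 0 < r₀) (hr₀' : r₀ < 2 * M)
    (t t' : ℝ → ℝ) (x x' : ℝ → EuclideanSpace ℝ (Fin 3))
    (ht : ∀ s ∈ Set.Icc (0 : ℝ) 1, HasDerivWithinAt t (t' s) (Set.Icc 0 1) s)
    (hx : ∀ s ∈ Set.Icc (0 : ℝ) 1, HasDerivWithinAt x (x' s) (Set.Icc 0 1) s)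
    (ht'c : ContinuousOn t' (Set.Icc 0 1)) (hx'c : ContinuousOn x' (Set.Icc 0 1))
    (hr : ∀ s ∈ Set.Icc (0 : ℝ) 1, 0 < ‖x s‖ ∧ ‖x s‖ < 2 * M)
    (htl : ∀ s ∈ Set.Icc (0 : ℝ) 1, QM M (t' s) (x' s) (x s) < 0)
    (hx0 : ‖x 0‖ = r₀) :
    ‖x 1‖ ≠ r₀ :=
  hypersurface_achronal_general M r₀ t' x x' hx hr htl hx0
end

section
/- Let M > 0, let x, x' ∈ ℝ³ and t' ∈ ℝ with 0 < ‖x‖ < 2M, Q_M(t', x', x) = −1, and ⟨x, x'⟩ > 0. Then ⟨x, x'⟩ / ‖x‖ ≥ √((2M − ‖x‖)/‖x‖); that is, along a unit-speed past-directed timelike curve the rate of increase ṙ of the radial coordinate r = ‖x‖ satisfies ṙ ≥ √((2M − r)/r). -/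
/-!
Write `r = ‖x‖` and `ṙ = ⟨x, x'⟩ / r`. Inside the horizon the form splits as
`Q_M = ((2M - r)/r) t'² + (‖x'‖² - ṙ²) - (r/(2M - r)) ṙ²`, where the first summand is
nonnegative because `r < 2M` and the second by Cauchy–Schwarz. Hence `Q_M = -1` forces
`(r/(2M - r)) ṙ² ≥ 1`, and taking square roots with `ṙ > 0` gives the bound.
-/

open RealInnerProductSpace

lemma sq_real_inner_div_norm_le {E : Type*} [NormedAddCommGroup E] [InnerProductSpace ℝ E]
    (x v : E) : (⟪x, v⟫ / ‖x‖) ^ 2 ≤ ‖v‖ ^ 2 := by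
  rcases (norm_nonneg x).eq_or_lt with hx | hx
  · simp [← hx]
  · rw [div_pow, div_le_iff₀ (by positivity), ← mul_pow, mul_comm ‖v‖]
    exact sq_le_sq' (neg_le_of_abs_le (abs_real_inner_le_norm x v)) (real_inner_le_norm x v)

lemma QM_eq_time_add_transverse_sub_radial {M t' : ℝ} {x x' : EuclideanSpace ℝ (Fin 3)}
    (h1 : 0 < ‖x‖) (h2 : ‖x‖ < 2 * M) :
    QM M t' x' x = (2 * M - ‖x‖) / ‖x‖ * t' ^ 2 + (‖x'‖ ^ 2 - (⟪x, x'⟫ / ‖x‖) ^ 2)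
      - ‖x‖ / (2 * M - ‖x‖) * (⟪x, x'⟫ / ‖x‖) ^ 2 := by
  have hs : 2 * M - ‖x‖ ≠ 0 := by linarith
  unfold QM
  field_simp
  ring

lemma le_sq_radial_rate_of_QM_le {M t' : ℝ} {x x' : EuclideanSpace ℝ (Fin 3)}
    (h1 : 0 < ‖x‖) (h2 : ‖x‖ < 2 * M) (hQ : QM M t' x' x ≤ -1) :
    (2 * M - ‖x‖) / ‖x‖ ≤ (⟪x, x'⟫ / ‖x‖) ^ 2 := by
  have hs : 0 < 2 * M - ‖x‖ := by linarith
  have htime : 0 ≤ (2 * M - ‖x‖) / ‖x‖ * t' ^ 2 := by positivity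
  have htransverse := sq_real_inner_div_norm_le x x'
  have hradial : 1 ≤ ‖x‖ / (2 * M - ‖x‖) * (⟪x, x'⟫ / ‖x‖) ^ 2 := by
    rw [QM_eq_time_add_transverse_sub_radial h1 h2] at hQ
    linarith
  rw [div_mul_eq_mul_div, le_div_iff₀ hs, one_mul] at hradial
  rw [div_le_iff₀ h1]
  linarith

theorem radial_rate_lower_bound_general (M : ℝ)
    (x x' : EuclideanSpace ℝ (Fin 3)) (t' : ℝ)
    (h1 : 0 < ‖x‖) (h2 : ‖x‖ < 2 * M)
    (hQ : QM M t' x' x = -1) (hpd : (0 : ℝ) < inner ℝ x x') :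
    Real.sqrt ((2 * M - ‖x‖) / ‖x‖) ≤ (inner ℝ x x' : ℝ) / ‖x‖ := by
  calc Real.sqrt ((2 * M - ‖x‖) / ‖x‖)
      ≤ Real.sqrt ((⟪x, x'⟫ / ‖x‖) ^ 2) :=
        Real.sqrt_le_sqrt (le_sq_radial_rate_of_QM_le h1 h2 hQ.le)
    _ = ⟪x, x'⟫ / ‖x‖ := Real.sqrt_sq (div_pos hpd h1).le

/-- Let `M > 0`, let `x, x' ∈ ℝ³` and `t' ∈ ℝ` with `0 < ‖x‖ < 2M`,
`Q_M(t', x', x) = −1`, and `⟨x, x'⟩ > 0`. Then `⟨x, x'⟩ / ‖x‖ ≥ √((2M − ‖x‖)/‖x‖)`;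
that is, along a unit-speed past-directed timelike curve the rate of increase `ṙ` of
the radial coordinate `r = ‖x‖` satisfies `ṙ ≥ √((2M − r)/r)`. -/
theorem radial_rate_lower_bound (M : ℝ) (hM : 0 < M)
    (x x' : EuclideanSpace ℝ (Fin 3)) (t' : ℝ)
    (h1 : 0 < ‖x‖) (h2 : ‖x‖ < 2 * M)
    (hQ : QM M t' x' x = -1) (hpd : (0 : ℝ) < inner ℝ x x') :
    Real.sqrt ((2 * M - ‖x‖) / ‖x‖) ≤ (inner ℝ x x' : ℝ) / ‖x‖ :=
  radial_rate_lower_bound_general M x x' t' h1 h2 hQ hpd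
end

section
/- Let M > 0 and let γ = (t, x) : [0, ∞) → ℝ × ℝ³ be a C¹ curve with 0 < ‖x(τ)‖ < 2M, Q_M(t'(τ), x'(τ), x(τ)) = −1, and ⟨x(τ), x'(τ)⟩ > 0 for every τ ≥ 0 (a past-directed unit-speed timelike curve defined for all values of its arc length). Then ‖x(τ)‖ → 2M as τ → ∞. -/
/-!
Since `d/dτ ‖x‖² = 2⟪x, x'⟫ > 0`, the radius `r = ‖x‖` increases and stays below `2M`.
Cauchy–Schwarz (`‖x'‖² ≥ ⟪x, x'⟫² / r²`) and `Q_M = -1` give `⟪x, x'⟫² ≥ (2M - r) r`.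
If `r` stayed below `2M - ε`, then `⟪x, x'⟫² ≥ ε r(0)`, so `‖x‖²` would grow at least
linearly and eventually exceed `4M²`.
-/

open Set Filter Topology
open scoped RealInnerProductSpace

theorem sub_norm_mul_norm_le_inner_sq_of_QM_le_neg_one {M t' : ℝ}
    {x x' : EuclideanSpace ℝ (Fin 3)} (hx : 0 < ‖x‖) (hx2M : ‖x‖ < 2 * M)
    (hQ : QM M t' x' x ≤ -1) :
    (2 * M - ‖x‖) * ‖x‖ ≤ ⟪x, x'⟫ ^ 2 := by
  set r := ‖x‖
  set p := ⟪x, x'⟫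
  have hgap : 0 < 2 * M - r := sub_pos.2 hx2M
  have htime : 0 ≤ (2 * M / r - 1) * t' ^ 2 := by
    have : 0 ≤ 2 * M / r - 1 := by rw [sub_nonneg, one_le_div hx]; linarith
    positivity
  have hcs : p ^ 2 / r ^ 2 ≤ ‖x'‖ ^ 2 := by
    rw [div_le_iff₀ (by positivity), ← mul_pow, mul_comm]
    exact sq_le_sq' (neg_le_of_abs_le (abs_real_inner_le_norm x x'))
      (le_of_abs_le (abs_real_inner_le_norm x x'))
  have hspace : p ^ 2 / r ^ 2 - 2 * M / ((2 * M - r) * r ^ 2) * p ^ 2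
      = -(p ^ 2 / ((2 * M - r) * r)) := by
    field_simp
    ring
  have : 1 ≤ p ^ 2 / ((2 * M - r) * r) := by
    unfold QM at hQ
    linarith
  rwa [one_le_div (by positivity)] at this

theorem Convex.mul_sub_le_image_sub_of_le_hasDerivWithinAt {D : Set ℝ} (hD : Convex ℝ D)
    {f f' : ℝ → ℝ} {C : ℝ} (hf : ∀ τ ∈ D, HasDerivWithinAt f (f' τ) D τ)
    (hC : ∀ τ ∈ D, C ≤ f' τ) {a b : ℝ} (ha : a ∈ D) (hb : b ∈ D) (hab : a ≤ b) :
    C * (b - a) ≤ f b - f a := by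
  have hderiv : ∀ τ ∈ interior D, HasDerivAt f (f' τ) τ := fun τ hτ =>
    (hf τ (interior_subset hτ)).hasDerivAt (mem_interior_iff_mem_nhds.1 hτ)
  refine hD.mul_sub_le_image_sub_of_le_deriv (fun τ hτ => (hf τ hτ).continuousWithinAt)
    (fun τ hτ => (hderiv τ hτ).differentiableAt.differentiableWithinAt) (fun τ hτ => ?_)
    a ha b hb hab
  rw [(hderiv τ hτ).deriv]
  exact hC τ (interior_subset hτ)

theorem not_bddAbove_image_Ici_of_le_hasDerivWithinAt {f f' : ℝ → ℝ} {a c : ℝ} (hc : 0 < c)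
    (hf : ∀ τ ∈ Ici a, HasDerivWithinAt f (f' τ) (Ici a) τ) (hf' : ∀ τ ∈ Ici a, c ≤ f' τ) :
    ¬BddAbove (f '' Ici a) := by
  rintro ⟨b, hb⟩
  set T := a + (b - f a) / c + 1
  have hT : a ≤ T := by
    have : f a ≤ b := hb (mem_image_of_mem f self_mem_Ici)
    have : 0 ≤ (b - f a) / c := div_nonneg (by linarith) hc.le
    linarith
  have hgrowth := (convex_Ici a).mul_sub_le_image_sub_of_le_hasDerivWithinAt hf hf'
    self_mem_Ici hT hT
  have hfT : f T ≤ b := hb (mem_image_of_mem f hT)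
  have : c * (T - a) = b - f a + c := by
    simp only [T]
    field_simp
    ring
  linarith

theorem monotoneOn_norm_of_inner_deriv_nonneg {E : Type*} [NormedAddCommGroup E]
    [InnerProductSpace ℝ E] {D : Set ℝ} (hD : Convex ℝ D) {x x' : ℝ → E}
    (hx : ∀ τ ∈ D, HasDerivWithinAt x (x' τ) D τ) (hinner : ∀ τ ∈ D, 0 ≤ ⟪x τ, x' τ⟫) :
    MonotoneOn (‖x ·‖) D := by
  intro a ha b hb hab
  have hsq := hD.mul_sub_le_image_sub_of_le_hasDerivWithinAt (C := 0)
    (fun τ hτ => (hx τ hτ).norm_sq) (fun τ hτ => by linarith [hinner τ hτ]) ha hb hab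
  rw [zero_mul, sub_nonneg] at hsq
  exact (pow_le_pow_iff_left₀ (norm_nonneg _) (norm_nonneg _) two_ne_zero).1 hsq

theorem tendsto_atTop_of_monotoneOn_Ici {f : ℝ → ℝ} {a R : ℝ} (hf : MonotoneOn f (Ici a))
    (hle : ∀ τ ∈ Ici a, f τ ≤ R) (hgt : ∀ r < R, ∃ τ ∈ Ici a, r < f τ) :
    Tendsto f atTop (𝓝 R) := by
  refine tendsto_order.2 ⟨fun r hr => ?_, fun r hr => ?_⟩
  · obtain ⟨T, hT, hrT⟩ := hgt r hr
    filter_upwards [eventually_ge_atTop T] with τ hτ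
    exact hrT.trans_le (hf hT (mem_Ici.2 (le_trans hT hτ)) hτ)
  · filter_upwards [eventually_ge_atTop a] with τ hτ
    exact (hle τ hτ).trans_lt hr

theorem tendsto_norm_of_sub_norm_mul_norm_le_inner_sq {E : Type*} [NormedAddCommGroup E]
    [InnerProductSpace ℝ E] {x x' : ℝ → E} {a R : ℝ}
    (hx : ∀ τ ∈ Ici a, HasDerivWithinAt x (x' τ) (Ici a) τ) (hpos : 0 < ‖x a‖)
    (hR : ∀ τ ∈ Ici a, ‖x τ‖ ≤ R) (hinner : ∀ τ ∈ Ici a, 0 ≤ ⟪x τ, x' τ⟫)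
    (hbound : ∀ τ ∈ Ici a, (R - ‖x τ‖) * ‖x τ‖ ≤ ⟪x τ, x' τ⟫ ^ 2) :
    Tendsto (‖x ·‖) atTop (𝓝 R) := by
  have hmono := monotoneOn_norm_of_inner_deriv_nonneg (convex_Ici a) hx hinner
  refine tendsto_atTop_of_monotoneOn_Ici hmono hR fun r hr => ?_
  by_contra! hle
  set δ := (R - r) * ‖x a‖
  have hδ : 0 < δ := mul_pos (sub_pos.2 hr) hpos
  have hspeed : ∀ τ ∈ Ici a, 2 * √δ ≤ 2 * ⟪x τ, x' τ⟫ := fun τ hτ => by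
    have : δ ≤ ⟪x τ, x' τ⟫ ^ 2 :=
      (mul_le_mul (by linarith [hle τ hτ]) (hmono self_mem_Ici hτ hτ) hpos.le
        (by linarith [hR τ hτ])).trans (hbound τ hτ)
    linarith [Real.sqrt_le_sqrt this, Real.sqrt_sq (hinner τ hτ)]
  refine not_bddAbove_image_Ici_of_le_hasDerivWithinAt (by positivity)
    (fun τ hτ => (hx τ hτ).norm_sq) hspeed ⟨R ^ 2, ?_⟩
  rintro _ ⟨τ, hτ, rfl⟩
  exact pow_le_pow_left₀ (norm_nonneg _) (hR τ hτ) 2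

theorem radial_coordinate_tendsto_two_M_general (M : ℝ)
    (t' : ℝ → ℝ) (x x' : ℝ → EuclideanSpace ℝ (Fin 3))
    (hx : ∀ τ : ℝ, 0 ≤ τ → HasDerivWithinAt x (x' τ) (Set.Ici 0) τ)
    (hr : ∀ τ : ℝ, 0 ≤ τ → 0 < ‖x τ‖ ∧ ‖x τ‖ < 2 * M)
    (hQ : ∀ τ : ℝ, 0 ≤ τ → QM M (t' τ) (x' τ) (x τ) = -1)
    (hpd : ∀ τ : ℝ, 0 ≤ τ → (0 : ℝ) < inner ℝ (x τ) (x' τ)) :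
    Filter.Tendsto (fun τ => ‖x τ‖) Filter.atTop (nhds (2 * M)) :=
  tendsto_norm_of_sub_norm_mul_norm_le_inner_sq hx (hr 0 le_rfl).1 (fun τ hτ => (hr τ hτ).2.le)
    (fun τ hτ => (hpd τ hτ).le) fun τ hτ =>
      sub_norm_mul_norm_le_inner_sq_of_QM_le_neg_one (hr τ hτ).1 (hr τ hτ).2 (hQ τ hτ).le

/-- Let `M > 0` and let `γ = (t, x) : [0, ∞) → ℝ × ℝ³` be a C¹ curve with
`0 < ‖x(τ)‖ < 2M`, `Q_M(t'(τ), x'(τ), x(τ)) = −1`, and `⟨x(τ), x'(τ)⟩ > 0` for every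
`τ ≥ 0` (a past-directed unit-speed timelike curve defined for all values of its
arc length). Then `‖x(τ)‖ → 2M` as `τ → ∞`. -/
theorem radial_coordinate_tendsto_two_M (M : ℝ) (hM : 0 < M)
    (t t' : ℝ → ℝ) (x x' : ℝ → EuclideanSpace ℝ (Fin 3))
    (ht : ∀ τ : ℝ, 0 ≤ τ → HasDerivWithinAt t (t' τ) (Set.Ici 0) τ)
    (hx : ∀ τ : ℝ, 0 ≤ τ → HasDerivWithinAt x (x' τ) (Set.Ici 0) τ)
    (ht'c : ContinuousOn t' (Set.Ici 0)) (hx'c : ContinuousOn x' (Set.Ici 0))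
    (hr : ∀ τ : ℝ, 0 ≤ τ → 0 < ‖x τ‖ ∧ ‖x τ‖ < 2 * M)
    (hQ : ∀ τ : ℝ, 0 ≤ τ → QM M (t' τ) (x' τ) (x τ) = -1)
    (hpd : ∀ τ : ℝ, 0 ≤ τ → (0 : ℝ) < inner ℝ (x τ) (x' τ)) :
    Filter.Tendsto (fun τ => ‖x τ‖) Filter.atTop (nhds (2 * M)) :=
  radial_coordinate_tendsto_two_M_general M t' x x' hx hr hQ hpd
end

section
/- Let M > 0, let x, x' ∈ ℝ³ and t' ∈ ℝ with 0 < ‖x‖ < 2M, Q_M(t', x', x) = −1, and ⟨x, x'⟩ > 0, and set r := ‖x‖ and ṙ := ⟨x, x'⟩/‖x‖. Then ṙ ≥ √((2M − r)/(2M)) · √(1 + ‖x'‖²) and ṙ ≥ ((2M − r)/√(2M·r)) · |t'|. -/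
/-! Solving the quadratic form for the radial rate `ṙ = ⟨x, x'⟩ / r` gives
`ṙ² = (2M - r)/(2M) · ((2M - r)/r · t'² + 1 + ‖x'‖²)` on unit-speed timelike velocities.
Inside the horizon both summands are nonnegative, so dropping either one bounds `ṙ²` from
below, and `ṙ > 0` for past-directed velocities turns these into bounds on `ṙ`. -/

theorem sq_inner_div_norm_eq_of_QM (M t' : ℝ) {x : EuclideanSpace ℝ (Fin 3)}
    (x' : EuclideanSpace ℝ (Fin 3)) (hM : M ≠ 0) (hx : ‖x‖ ≠ 0) (hxM : 2 * M - ‖x‖ ≠ 0) :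
    (inner ℝ x x' / ‖x‖) ^ 2 = (2 * M - ‖x‖) / (2 * M)
      * ((2 * M - ‖x‖) / ‖x‖ * t' ^ 2 + (‖x'‖ ^ 2 - QM M t' x' x)) := by
  unfold QM
  field_simp
  ring

section RadialRate

variable {a r v E : ℝ}

theorem sqrt_mul_sqrt_le_of_sq_eq (T : ℝ) (hr : 0 < r) (hra : r < a) (hv : 0 ≤ v)
    (hsq : v ^ 2 = (a - r) / a * ((a - r) / r * T ^ 2 + E)) :
    Real.sqrt ((a - r) / a) * Real.sqrt E ≤ v := by
  have hA : 0 ≤ (a - r) / a := div_nonneg (by linarith) (by linarith)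
  rw [← Real.sqrt_mul hA, Real.sqrt_le_iff, hsq]
  refine ⟨hv, mul_le_mul_of_nonneg_left ?_ hA⟩
  have : 0 ≤ (a - r) / r * T ^ 2 := mul_nonneg (div_nonneg (by linarith) hr.le) (sq_nonneg T)
  linarith

theorem div_sqrt_mul_abs_le_of_sq_eq (T : ℝ) (hr : 0 < r) (hra : r < a) (hv : 0 ≤ v)
    (hE : 0 ≤ E) (hsq : v ^ 2 = (a - r) / a * ((a - r) / r * T ^ 2 + E)) :
    (a - r) / Real.sqrt (a * r) * |T| ≤ v := by
  have ha : 0 < a := hr.trans hra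
  have har : 0 < a - r := by linarith
  rw [← pow_le_pow_iff_left₀ (by positivity) hv two_ne_zero, hsq, mul_pow, div_pow,
    Real.sq_sqrt (by positivity), sq_abs]
  have hsplit : (a - r) / a * ((a - r) / r * T ^ 2 + E)
      = (a - r) ^ 2 / (a * r) * T ^ 2 + (a - r) / a * E := by
    field_simp
  have : 0 ≤ (a - r) / a * E := by positivity
  linarith

end RadialRate

theorem radial_rate_lower_bounds_general (M : ℝ)
    (x x' : EuclideanSpace ℝ (Fin 3)) (t' : ℝ)
    (h1 : 0 < ‖x‖) (h2 : ‖x‖ < 2 * M)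
    (hQ : QM M t' x' x = -1) (hpd : (0 : ℝ) < inner ℝ x x') :
    Real.sqrt ((2 * M - ‖x‖) / (2 * M)) * Real.sqrt (1 + ‖x'‖ ^ 2)
        ≤ (inner ℝ x x' : ℝ) / ‖x‖ ∧
      ((2 * M - ‖x‖) / Real.sqrt (2 * M * ‖x‖)) * |t'| ≤ (inner ℝ x x' : ℝ) / ‖x‖ := by
  have hsq := sq_inner_div_norm_eq_of_QM M t' x' (by linarith) h1.ne' (by linarith)
  rw [hQ, sub_neg_eq_add, add_comm (‖x'‖ ^ 2)] at hsq
  have hv : 0 ≤ inner ℝ x x' / ‖x‖ := div_nonneg hpd.le h1.le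
  have hE : (0 : ℝ) ≤ 1 + ‖x'‖ ^ 2 := by positivity
  exact ⟨sqrt_mul_sqrt_le_of_sq_eq t' h1 h2 hv hsq,
    div_sqrt_mul_abs_le_of_sq_eq t' h1 h2 hv hE hsq⟩

/-- Let `M > 0`, let `x, x' ∈ ℝ³` and `t' ∈ ℝ` with `0 < ‖x‖ < 2M`,
`Q_M(t', x', x) = −1`, and `⟨x, x'⟩ > 0`, and set `r := ‖x‖` and `ṙ := ⟨x, x'⟩/‖x‖`.
Then `ṙ ≥ √((2M − r)/(2M)) · √(1 + ‖x'‖²)` and `ṙ ≥ ((2M − r)/√(2M·r)) · |t'|`. -/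
theorem radial_rate_lower_bounds (M : ℝ) (hM : 0 < M)
    (x x' : EuclideanSpace ℝ (Fin 3)) (t' : ℝ)
    (h1 : 0 < ‖x‖) (h2 : ‖x‖ < 2 * M)
    (hQ : QM M t' x' x = -1) (hpd : (0 : ℝ) < inner ℝ x x') :
    Real.sqrt ((2 * M - ‖x‖) / (2 * M)) * Real.sqrt (1 + ‖x'‖ ^ 2)
        ≤ (inner ℝ x x' : ℝ) / ‖x‖ ∧
      ((2 * M - ‖x‖) / Real.sqrt (2 * M * ‖x‖)) * |t'| ≤ (inner ℝ x x' : ℝ) / ‖x‖ :=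
  radial_rate_lower_bounds_general M x x' t' h1 h2 hQ hpd
end

section
/- Let M > 0, let 0 < r₁ ≤ r₀ < 2M, let b ∈ (0, ∞), and let γ = (t, x) : [0, b) → ℝ × ℝ³ be a C¹ curve with r₁ ≤ ‖x(τ)‖ ≤ r₀ and Q_M(t'(τ), x'(τ), x(τ)) = −1 for every τ ∈ [0, b). Then the limit (t_M, x_M) := lim_{τ → b⁻} γ(τ) exists in ℝ × ℝ³ and satisfies r₁ ≤ ‖x_M‖ ≤ r₀; in particular the limit point lies in M_Sch, so γ admits a continuous extension to [0, b] with values in M_Sch. -/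
open Set Filter Topology Function

section CurveLimits

variable {E : Type*} [NormedAddCommGroup E] [NormedSpace ℝ E]

theorem norm_sub_le_sub_of_norm_deriv_le {γ γ' : ℝ → E} {f f' : ℝ → ℝ} {a b : ℝ} (hab : a ≤ b)
    (hγ : ∀ τ ∈ Icc a b, HasDerivWithinAt γ (γ' τ) (Icc a b) τ)
    (hf : ∀ τ ∈ Icc a b, HasDerivWithinAt f (f' τ) (Icc a b) τ)
    (hle : ∀ τ ∈ Ico a b, ‖γ' τ‖ ≤ f' τ) : ‖γ b - γ a‖ ≤ f b - f a := by
  have hright : ∀ τ ∈ Ico a b, Icc a b ∈ 𝓝[≥] τ := fun τ hτ =>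
    mem_of_superset (Ico_mem_nhdsGE hτ.2) (Icc_subset_Icc_left hτ.1 |>.trans' Ico_subset_Icc_self)
  refine image_norm_le_of_norm_deriv_right_le_deriv_boundary' (f := fun τ => γ τ - γ a)
    (B := fun τ => f τ - f a) ?_ (fun τ hτ => ?_) (by simp) ?_ (fun τ hτ => ?_) hle
    (right_mem_Icc.2 hab)
  · exact fun τ hτ => ((hγ τ hτ).sub_const _).continuousWithinAt
  · exact ((hγ τ (Ico_subset_Icc_self hτ)).sub_const _).mono_of_mem_nhdsWithin (hright τ hτ)
  · exact fun τ hτ => ((hf τ hτ).sub_const _).continuousWithinAt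
  · exact ((hf τ (Ico_subset_Icc_self hτ)).sub_const _).mono_of_mem_nhdsWithin (hright τ hτ)

theorem Cauchy.map_of_eventually_dist_le {α X Y : Type*} [PseudoMetricSpace X]
    [PseudoMetricSpace Y] {l : Filter α} {g : α → X} {f : α → Y} (hf : Cauchy (l.map f))
    (h : ∀ᶠ p in l ×ˢ l, dist (g p.1) (g p.2) ≤ dist (f p.1) (f p.2)) : Cauchy (l.map g) := by
  rw [cauchy_map_iff, Metric.uniformity_eq_comap_nhds_zero, tendsto_comap_iff] at hf ⊢
  exact ⟨hf.1, squeeze_zero' (Eventually.of_forall fun _ => dist_nonneg) h hf.2⟩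

variable [CompleteSpace E] {γ γ' : ℝ → E} {f f' : ℝ → ℝ} {a b : ℝ}

theorem exists_tendsto_nhdsLT_of_norm_deriv_le (hab : a < b)
    (hγ : ∀ τ ∈ Ico a b, HasDerivWithinAt γ (γ' τ) (Ico a b) τ)
    (hf : ∀ τ ∈ Ico a b, HasDerivWithinAt f (f' τ) (Ico a b) τ)
    (hle : ∀ τ ∈ Ico a b, ‖γ' τ‖ ≤ f' τ) (hbdd : BddAbove (f '' Ico a b)) :
    ∃ p, Tendsto γ (𝓝[<] b) (𝓝 p) := by
  have hvar : ∀ s ∈ Ico a b, ∀ τ ∈ Ico a b, s ≤ τ → ‖γ τ - γ s‖ ≤ f τ - f s := by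
    intro s hs τ hτ hsτ
    have hsub : Icc s τ ⊆ Ico a b := Icc_subset_Ico hs.1 hτ.2
    exact norm_sub_le_sub_of_norm_deriv_le hsτ (fun u hu => (hγ u (hsub hu)).mono hsub)
      (fun u hu => (hf u (hsub hu)).mono hsub) (fun u hu => hle u (hsub (Ico_subset_Icc_self hu)))
  have hdist : ∀ s ∈ Ico a b, ∀ τ ∈ Ico a b, dist (γ s) (γ τ) ≤ dist (f s) (f τ) := by
    intro s hs τ hτ
    wlog hsτ : s ≤ τ generalizing s τ
    · rw [dist_comm, dist_comm (f s)]
      exact this τ hτ s hs (le_of_not_ge hsτ)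
    have h := hvar s hs τ hτ hsτ
    rw [dist_comm, dist_eq_norm, dist_comm, Real.dist_eq, abs_of_nonneg ((norm_nonneg _).trans h)]
    exact h
  have hmono : MonotoneOn f (Ioo a b) := fun s hs τ hτ hsτ =>
    sub_nonneg.1 ((norm_nonneg _).trans
      (hvar s (Ioo_subset_Ico_self hs) τ (Ioo_subset_Ico_self hτ) hsτ))
  have hf_lim := hmono.tendsto_nhdsWithin_Ioo_left (nonempty_Ioo.2 hab)
    (hbdd.mono (image_mono Ioo_subset_Ico_self))
  have hIco : ∀ᶠ q in 𝓝[<] b ×ˢ 𝓝[<] b, q ∈ Ico a b ×ˢ Ico a b :=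
    prod_mem_prod (Ico_mem_nhdsLT hab) (Ico_mem_nhdsLT hab)
  exact cauchy_map_iff_exists_tendsto.1
    (hf_lim.cauchy_map.map_of_eventually_dist_le (hIco.mono fun q hq => hdist _ hq.1 _ hq.2))

theorem exists_tendsto_nhdsLT_of_norm_deriv_le_mul_abs {C B : ℝ} (hab : a < b)
    (hγ : ∀ τ ∈ Ico a b, HasDerivWithinAt γ (γ' τ) (Ico a b) τ)
    (hf : ∀ τ ∈ Ico a b, HasDerivWithinAt f (f' τ) (Ico a b) τ)
    (hf' : ∀ τ ∈ Ico a b, f' τ ≠ 0) (hfB : ∀ τ ∈ Ico a b, |f τ| ≤ B)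
    (hle : ∀ τ ∈ Ico a b, ‖γ' τ‖ ≤ C * |f' τ|) :
    ∃ p, Tendsto γ (𝓝[<] b) (𝓝 p) := by
  have hCfB : ∀ τ ∈ Ico a b, |C * f τ| ≤ |C| * B := fun τ hτ => by
    rw [abs_mul]; exact mul_le_mul_of_nonneg_left (hfB τ hτ) (abs_nonneg C)
  rcases hasDerivWithinAt_forall_lt_or_forall_gt_of_forall_ne (convex_Ico a b) hf hf'
    with hneg | hpos
  · refine exists_tendsto_nhdsLT_of_norm_deriv_le hab hγ
      (fun τ hτ => ((hf τ hτ).const_mul C).neg) (fun τ hτ => ?_) ⟨|C| * B, ?_⟩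
    · simpa [abs_of_neg (hneg τ hτ)] using hle τ hτ
    · rintro _ ⟨τ, hτ, rfl⟩
      exact (neg_le_abs _).trans (hCfB τ hτ)
  · refine exists_tendsto_nhdsLT_of_norm_deriv_le hab hγ
      (fun τ hτ => (hf τ hτ).const_mul C) (fun τ hτ => ?_) ⟨|C| * B, ?_⟩
    · simpa [abs_of_pos (hpos τ hτ)] using hle τ hτ
    · rintro _ ⟨τ, hτ, rfl⟩
      exact (le_abs_self _).trans (hCfB τ hτ)

end CurveLimits

section Schwarzschild

variable {M u : ℝ} {v x : EuclideanSpace ℝ (Fin 3)}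

theorem QM_eq_neg_one_iff (hx : 0 < ‖x‖) (hxM : ‖x‖ < 2 * M) :
    QM M u v x = -1 ↔ 2 * M * inner ℝ x v ^ 2 =
      (1 + ‖v‖ ^ 2) * ((2 * M - ‖x‖) * ‖x‖ ^ 2) + (2 * M - ‖x‖) ^ 2 * ‖x‖ * u ^ 2 := by
  have hxM' : 2 * M - ‖x‖ ≠ 0 := (sub_pos.2 hxM).ne'
  rw [QM]
  field_simp
  constructor <;> intro h <;> linarith

theorem inner_ne_zero_of_QM_eq_neg_one (hx : 0 < ‖x‖) (hxM : ‖x‖ < 2 * M)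
    (hQ : QM M u v x = -1) : inner ℝ x v ≠ 0 := by
  intro h0
  have h := (QM_eq_neg_one_iff hx hxM).1 hQ
  have hpos : 0 < (1 + ‖v‖ ^ 2) * ((2 * M - ‖x‖) * ‖x‖ ^ 2) := by
    have := sub_pos.2 hxM
    positivity
  have hnonneg : 0 ≤ (2 * M - ‖x‖) ^ 2 * ‖x‖ * u ^ 2 := by positivity
  rw [h0] at h
  linarith

theorem exists_norm_le_mul_abs_inner_of_QM_eq_neg_one {r₁ r₀ : ℝ} (hr₁ : 0 < r₁)
    (hr₀ : r₀ < 2 * M) :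
    ∃ C : ℝ, ∀ (u : ℝ) (v x : EuclideanSpace ℝ (Fin 3)), r₁ ≤ ‖x‖ → ‖x‖ ≤ r₀ →
      QM M u v x = -1 → ‖(u, v)‖ ≤ C * |inner ℝ x v| := by
  -- `k` bounds both coefficients `(2M - r)² r` and `(2M - r) r²` from below on the shell.
  set k := (2 * M - r₀) * r₁ * min r₁ (2 * M - r₀)
  refine ⟨√(2 * M / k), fun u v x hr₁x hxr₀ hQ => ?_⟩
  have hM₀ : 0 < 2 * M - r₀ := sub_pos.2 hr₀
  have hk : 0 < k := by have := lt_min hr₁ hM₀; positivity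
  have hx : 0 < ‖x‖ := hr₁.trans_le hr₁x
  have hxM : 0 < 2 * M - ‖x‖ := by linarith
  have hE := (QM_eq_neg_one_iff hx (sub_pos.1 hxM)).1 hQ
  have hE₁ : 0 ≤ (2 * M - ‖x‖) * ‖x‖ ^ 2 := by positivity
  have hE₂ : 0 ≤ (2 * M - ‖x‖) ^ 2 * ‖x‖ * u ^ 2 := by positivity
  have hu : k * u ^ 2 ≤ 2 * M * inner ℝ x v ^ 2 := by
    have : k ≤ (2 * M - ‖x‖) ^ 2 * ‖x‖ := calc
      k ≤ (2 * M - r₀) * r₁ * (2 * M - r₀) :=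
        mul_le_mul_of_nonneg_left (min_le_right _ _) (by positivity)
      _ = (2 * M - r₀) ^ 2 * r₁ := by ring
      _ ≤ (2 * M - ‖x‖) ^ 2 * ‖x‖ := by gcongr
    linarith [mul_le_mul_of_nonneg_right this (sq_nonneg u), mul_nonneg hE₁ (sq_nonneg ‖v‖)]
  have hv : k * ‖v‖ ^ 2 ≤ 2 * M * inner ℝ x v ^ 2 := by
    have : k ≤ (2 * M - ‖x‖) * ‖x‖ ^ 2 := calc
      k ≤ (2 * M - r₀) * r₁ * r₁ :=
        mul_le_mul_of_nonneg_left (min_le_left _ _) (by positivity)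
      _ = (2 * M - r₀) * r₁ ^ 2 := by ring
      _ ≤ (2 * M - ‖x‖) * ‖x‖ ^ 2 := by gcongr
    linarith [mul_le_mul_of_nonneg_right this (sq_nonneg ‖v‖)]
  have hw : k * ‖(u, v)‖ ^ 2 ≤ 2 * M * inner ℝ x v ^ 2 := by
    rcases max_choice ‖u‖ ‖v‖ with h | h <;> rw [Prod.norm_def, h]
    · rwa [Real.norm_eq_abs, sq_abs]
    · exact hv
  calc ‖(u, v)‖ = √(‖(u, v)‖ ^ 2) := (Real.sqrt_sq (norm_nonneg _)).symm
    _ ≤ √(2 * M / k * inner ℝ x v ^ 2) := by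
      gcongr
      rw [div_mul_eq_mul_div, le_div_iff₀ hk]
      linarith
    _ = √(2 * M / k) * |inner ℝ x v| := by
      rw [Real.sqrt_mul' _ (sq_nonneg _), Real.sqrt_sq_eq_abs]

end Schwarzschild

theorem timelike_curve_extends_to_endpoint_general (M : ℝ)
    (r₁ r₀ : ℝ) (h1 : 0 < r₁) (h0 : r₀ < 2 * M)
    (b : ℝ) (hb : 0 < b)
    (t t' : ℝ → ℝ) (x x' : ℝ → EuclideanSpace ℝ (Fin 3))
    (ht : ∀ τ ∈ Set.Ico 0 b, HasDerivWithinAt t (t' τ) (Set.Ico 0 b) τ)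
    (hx : ∀ τ ∈ Set.Ico 0 b, HasDerivWithinAt x (x' τ) (Set.Ico 0 b) τ)
    (hr : ∀ τ ∈ Set.Ico 0 b, r₁ ≤ ‖x τ‖ ∧ ‖x τ‖ ≤ r₀)
    (hQ : ∀ τ ∈ Set.Ico 0 b, QM M (t' τ) (x' τ) (x τ) = -1) :
    ∃ p : ℝ × EuclideanSpace ℝ (Fin 3),
      Filter.Tendsto (fun τ => (t τ, x τ)) (nhdsWithin b (Set.Iio b)) (nhds p) ∧
      r₁ ≤ ‖p.2‖ ∧ ‖p.2‖ ≤ r₀ ∧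
      ∃ γ' : ℝ → ℝ × EuclideanSpace ℝ (Fin 3),
        ContinuousOn γ' (Set.Icc 0 b) ∧
        (∀ τ ∈ Set.Ico 0 b, γ' τ = (t τ, x τ)) ∧
        ∀ τ ∈ Set.Icc 0 b, 0 < ‖(γ' τ).2‖ ∧ ‖(γ' τ).2‖ < 2 * M := by
  have hγ : ∀ τ ∈ Ico 0 b, HasDerivWithinAt (fun τ => (t τ, x τ)) (t' τ, x' τ) (Ico 0 b) τ :=
    fun τ hτ => (ht τ hτ).prodMk (hx τ hτ)
  obtain ⟨C, hC⟩ := exists_norm_le_mul_abs_inner_of_QM_eq_neg_one h1 h0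
  obtain ⟨p, hp⟩ := exists_tendsto_nhdsLT_of_norm_deriv_le_mul_abs (C := C / 2) hb hγ
    (fun τ hτ => (hx τ hτ).norm_sq)
    (fun τ hτ => mul_ne_zero two_ne_zero <| inner_ne_zero_of_QM_eq_neg_one
      (h1.trans_le (hr τ hτ).1) ((hr τ hτ).2.trans_lt h0) (hQ τ hτ))
    (fun τ hτ => by
      rw [abs_of_nonneg (by positivity)]
      exact pow_le_pow_left₀ (norm_nonneg _) (hr τ hτ).2 2)
    (fun τ hτ => by
      rw [abs_mul, abs_two]
      linarith [hC _ _ _ (hr τ hτ).1 (hr τ hτ).2 (hQ τ hτ)])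
  have hp_mem : r₁ ≤ ‖p.2‖ ∧ ‖p.2‖ ≤ r₀ :=
    ((isClosed_le continuous_const continuous_snd.norm).inter
      (isClosed_le continuous_snd.norm continuous_const)).mem_of_tendsto hp
      (mem_of_superset (Ico_mem_nhdsLT hb) fun τ hτ => hr τ hτ)
  set γ := update (fun τ => (t τ, x τ)) b p
  have hγ_mem : ∀ τ ∈ Icc 0 b, r₁ ≤ ‖(γ τ).2‖ ∧ ‖(γ τ).2‖ ≤ r₀ := by
    rintro τ ⟨hτ₀, hτb⟩
    rcases hτb.eq_or_lt with rfl | hτb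
    · simpa [γ] using hp_mem
    · simpa [γ, hτb.ne] using hr τ ⟨hτ₀, hτb⟩
  refine ⟨p, hp, hp_mem.1, hp_mem.2, γ, ?_, fun τ hτ => update_of_ne hτ.2.ne _ _, fun τ hτ =>
    ⟨h1.trans_le (hγ_mem τ hτ).1, (hγ_mem τ hτ).2.trans_lt h0⟩⟩
  rw [continuousOn_update_iff, Icc_sdiff_right]
  exact ⟨fun τ hτ => (hγ τ hτ).continuousWithinAt, fun _ => by rwa [nhdsWithin_Ico_eq_nhdsLT hb]⟩

/-- Let `M > 0`, let `0 < r₁ ≤ r₀ < 2M`, let `b ∈ (0, ∞)`, and let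
`γ = (t, x) : [0, b) → ℝ × ℝ³` be a C¹ curve with `r₁ ≤ ‖x(τ)‖ ≤ r₀` and
`Q_M(t'(τ), x'(τ), x(τ)) = −1` for every `τ ∈ [0, b)`. Then the limit
`(t_M, x_M) := lim_{τ → b⁻} γ(τ)` exists in `ℝ × ℝ³` and satisfies
`r₁ ≤ ‖x_M‖ ≤ r₀`; in particular the limit point lies in `M_Sch`, so `γ` admits a
continuous extension to `[0, b]` with values in `M_Sch`. -/
theorem timelike_curve_extends_to_endpoint (M : ℝ) (hM : 0 < M)
    (r₁ r₀ : ℝ) (h1 : 0 < r₁) (h10 : r₁ ≤ r₀) (h0 : r₀ < 2 * M)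
    (b : ℝ) (hb : 0 < b)
    (t t' : ℝ → ℝ) (x x' : ℝ → EuclideanSpace ℝ (Fin 3))
    (ht : ∀ τ ∈ Set.Ico 0 b, HasDerivWithinAt t (t' τ) (Set.Ico 0 b) τ)
    (hx : ∀ τ ∈ Set.Ico 0 b, HasDerivWithinAt x (x' τ) (Set.Ico 0 b) τ)
    (ht'c : ContinuousOn t' (Set.Ico 0 b)) (hx'c : ContinuousOn x' (Set.Ico 0 b))
    (hr : ∀ τ ∈ Set.Ico 0 b, r₁ ≤ ‖x τ‖ ∧ ‖x τ‖ ≤ r₀)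
    (hQ : ∀ τ ∈ Set.Ico 0 b, QM M (t' τ) (x' τ) (x τ) = -1) :
    ∃ p : ℝ × EuclideanSpace ℝ (Fin 3),
      Filter.Tendsto (fun τ => (t τ, x τ)) (nhdsWithin b (Set.Iio b)) (nhds p) ∧
      r₁ ≤ ‖p.2‖ ∧ ‖p.2‖ ≤ r₀ ∧
      ∃ γ' : ℝ → ℝ × EuclideanSpace ℝ (Fin 3),
        ContinuousOn γ' (Set.Icc 0 b) ∧
        (∀ τ ∈ Set.Ico 0 b, γ' τ = (t τ, x τ)) ∧
        ∀ τ ∈ Set.Icc 0 b, 0 < ‖(γ' τ).2‖ ∧ ‖(γ' τ).2‖ < 2 * M :=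
  timelike_curve_extends_to_endpoint_general M r₁ r₀ h1 h0 b hb t t' x x' ht hx hr hQ
end

section
/- Let m > 0 and let t̃ : (0, ∞) → ℝ be a differentiable function satisfying |t̃'(r)| < r/(r + 2m) for every r > 0. Then the limit L := lim_{r → 0⁺} t̃(r) exists in ℝ, and for every r > 0 one has |t̃(r) − L| ≤ r − 2m·log(1 + r/(2m)); equivalently, L − [r − 2m·log(1 + r/(2m))] ≤ t̃(r) ≤ L + [r − 2m·log(1 + r/(2m))]. -/
/-! With `F r = r - 2m log (1 + r / 2m)` we have `F' r = r / (r + 2m)`, so the hypothesis reads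
`|t̃'| ≤ F'` and both `F - t̃` and `F + t̃` are monotone: `|t̃ b - t̃ a| ≤ F b - F a` for `0 < a ≤ b`.
As `F` is continuous at `0` with `F 0 = 0`, this makes `t̃` Cauchy at `0⁺`, and letting `a → 0⁺`
gives `|t̃ r - L| ≤ F r`. -/

open Filter Set Topology

theorem abs_sub_le_sub_of_abs_deriv_le {D : Set ℝ} (hD : Convex ℝ D) {f f' g g' : ℝ → ℝ}
    (hf : ∀ x ∈ D, HasDerivAt f (f' x) x) (hg : ∀ x ∈ D, HasDerivAt g (g' x) x)
    (hfg : ∀ x ∈ D, |f' x| ≤ g' x) {a b : ℝ} (ha : a ∈ D) (hb : b ∈ D) (hab : a ≤ b) :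
    |f b - f a| ≤ g b - g a := by
  have mono_le : ∀ {h h' : ℝ → ℝ}, (∀ x ∈ D, HasDerivAt h (h' x) x) → (∀ x ∈ D, 0 ≤ h' x) →
      h a ≤ h b := fun hh hh' =>
    monotoneOn_of_hasDerivWithinAt_nonneg hD
      (fun x hx => (hh x hx).continuousAt.continuousWithinAt)
      (fun x hx => (hh x (interior_subset hx)).hasDerivWithinAt)
      (fun x hx => hh' x (interior_subset hx)) ha hb hab
  have h_sub : g a - f a ≤ g b - f b := mono_le (fun x hx => (hg x hx).fun_sub (hf x hx))
    (fun x hx => by linarith [le_abs_self (f' x), hfg x hx])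
  have h_add : g a + f a ≤ g b + f b := mono_le (fun x hx => (hg x hx).fun_add (hf x hx))
    (fun x hx => by linarith [neg_abs_le (f' x), hfg x hx])
  rw [abs_le]
  constructor <;> linarith

theorem exists_tendsto_of_dist_le_dist {α E F : Type*} [PseudoMetricSpace E] [CompleteSpace E]
    [PseudoMetricSpace F] {l : Filter α} [NeBot l] {f : α → E} {g : α → F} {c : F}
    (hg : Tendsto g l (𝓝 c))
    (hfg : ∀ᶠ p in l ×ˢ l, dist (f p.1) (f p.2) ≤ dist (g p.1) (g p.2)) :
    ∃ L, Tendsto f l (𝓝 L) := by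
  have hg_cauchy : Tendsto (fun p : α × α => dist (g p.1) (g p.2)) (l ×ˢ l) (𝓝 0) :=
    tendsto_uniformity_iff_dist_tendsto_zero.1 (cauchy_map_iff'.1 hg.cauchy_map)
  have hf_cauchy : Tendsto (fun p : α × α => dist (f p.1) (f p.2)) (l ×ˢ l) (𝓝 0) :=
    squeeze_zero' (Eventually.of_forall fun _ => dist_nonneg) hfg hg_cauchy
  exact cauchy_map_iff_exists_tendsto.1
    (cauchy_map_iff'.2 (tendsto_uniformity_iff_dist_tendsto_zero.2 hf_cauchy))

theorem exists_tendsto_nhdsGT_and_abs_sub_le {f g : ℝ → ℝ} {a c : ℝ}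
    (hfg : ∀ x ∈ Ioi a, ∀ y ∈ Ioi a, x ≤ y → |f y - f x| ≤ g y - g x)
    (hg : Tendsto g (𝓝[>] a) (𝓝 c)) :
    ∃ L, Tendsto f (𝓝[>] a) (𝓝 L) ∧ ∀ r ∈ Ioi a, |f r - L| ≤ g r - c := by
  have h_dist : ∀ᶠ p in 𝓝[>] a ×ˢ 𝓝[>] a, dist (f p.1) (f p.2) ≤ dist (g p.1) (g p.2) := by
    filter_upwards [prod_mem_prod self_mem_nhdsWithin self_mem_nhdsWithin]
      with ⟨x, y⟩ ⟨hx, hy⟩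
    simp only [Real.dist_eq]
    rcases le_total x y with hxy | hyx
    · rw [abs_sub_comm, abs_sub_comm (g x)]
      exact (hfg x hx y hy hxy).trans (le_abs_self _)
    · exact (hfg y hy x hx hyx).trans (le_abs_self _)
  obtain ⟨L, hL⟩ := exists_tendsto_of_dist_le_dist hg h_dist
  refine ⟨L, hL, fun r hr => ?_⟩
  have h_near : ∀ᶠ x in 𝓝[>] a, |f r - f x| ≤ g r - g x := by
    filter_upwards [Ioo_mem_nhdsGT hr] with x hx
    exact hfg x hx.1 r hr hx.2.le
  exact le_of_tendsto_of_tendsto (tendsto_const_nhds.sub hL).abs (tendsto_const_nhds.sub hg) h_near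

theorem hasDerivAt_sub_mul_log_one_add_div {c r : ℝ} (hc : c ≠ 0) (hr : r + c ≠ 0) :
    HasDerivAt (fun x => x - c * Real.log (1 + x / c)) (r / (r + c)) r := by
  have h_arg : 1 + r / c ≠ 0 := by
    rwa [one_add_div hc, div_ne_zero_iff, add_comm, and_iff_left hc]
  have h_log : HasDerivAt (fun x => Real.log (1 + x / c)) ((1 / c) / (1 + r / c)) r :=
    (((hasDerivAt_id r).div_const c).const_add 1).log h_arg
  refine ((hasDerivAt_id' r).fun_sub (h_log.const_mul c)).congr_deriv ?_
  rw [one_add_div hc, add_comm c r]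
  field_simp
  ring

/-- Let `m > 0` and let `t̃ : (0, ∞) → ℝ` be a differentiable function satisfying
`|t̃'(r)| < r/(r + 2m)` for every `r > 0`. Then the limit `L := lim_{r → 0⁺} t̃(r)`
exists in `ℝ`, and for every `r > 0` one has
`|t̃(r) − L| ≤ r − 2m·log(1 + r/(2m))`; equivalently,
`L − [r − 2m·log(1 + r/(2m))] ≤ t̃(r) ≤ L + [r − 2m·log(1 + r/(2m))]`. -/
theorem cauchy_surface_radial_profile_bounded (m : ℝ) (hm : 0 < m)
    (ttil ttil' : ℝ → ℝ)
    (hd : ∀ r : ℝ, 0 < r → HasDerivAt ttil (ttil' r) r)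
    (hb : ∀ r : ℝ, 0 < r → |ttil' r| < r / (r + 2 * m)) :
    ∃ L : ℝ, Filter.Tendsto ttil (nhdsWithin 0 (Set.Ioi 0)) (nhds L) ∧
      ∀ r : ℝ, 0 < r → |ttil r - L| ≤ r - 2 * m * Real.log (1 + r / (2 * m)) := by
  set F : ℝ → ℝ := fun r => r - 2 * m * Real.log (1 + r / (2 * m))
  have hF : ∀ r, 0 ≤ r → HasDerivAt F (r / (r + 2 * m)) r := fun r hr =>
    hasDerivAt_sub_mul_log_one_add_div (by positivity) (by positivity)
  have hF_zero : Tendsto F (𝓝[>] 0) (𝓝 0) := by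
    simpa [F] using (hF 0 le_rfl).continuousAt.continuousWithinAt.tendsto (s := Ioi 0)
  have h_increment : ∀ a ∈ Ioi (0 : ℝ), ∀ b ∈ Ioi (0 : ℝ), a ≤ b → |ttil b - ttil a| ≤ F b - F a :=
    fun a ha b hb' hab => abs_sub_le_sub_of_abs_deriv_le (convex_Ioi 0) hd
      (fun x hx => hF x hx.le) (fun x hx => (hb x hx).le) ha hb' hab
  obtain ⟨L, hL, h_bound⟩ := exists_tendsto_nhdsGT_and_abs_sub_le h_increment hF_zero
  exact ⟨L, hL, fun r hr => by simpa using h_bound r hr⟩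
end

section
/- Let m > 0 and let t̃ : (0, ∞) → ℝ be a differentiable function satisfying |t̃'(r)| < r/(r + 2m) for every r > 0, and let L := lim_{r → 0⁺} t̃(r). Then for every c > L and every r > 0 one has t̃(r) < c + r − 2m·log(1 + r/(2m)); i.e., the graph {(t̃(r), r) : r > 0} is disjoint from every radial null curve {(c + r − 2m·log(1 + r/(2m)), r) : r > 0} with c > L, so some radially outgoing null geodesic emanating from r = 0 never intersects the putative Cauchy surface. -/
/-!
The difference between the outgoing null time `r - 2m log(1 + r/(2m))` and `t̃` has derivative
`r/(r + 2m) - t̃'(r) > 0`, so it is increasing on `(0, ∞)`. Its limit at `0⁺` is `-L`, hence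
`t̃(r) ≤ L + r - 2m log(1 + r/(2m))` for every `r > 0`, which is strictly less than the null curve
with constant `c > L`.
-/

open Filter Set Topology

theorem MonotoneOn.le_of_tendsto_nhdsGT {α β : Type*} [LinearOrder α] [TopologicalSpace α]
    [OrderTopology α] [DenselyOrdered α] [NoMaxOrder α] [Preorder β] [TopologicalSpace β]
    [ClosedIicTopology β] {f : α → β} {a x : α} {l : β} (hf : MonotoneOn f (Ioi a))
    (hl : Tendsto f (𝓝[>] a) (𝓝 l)) (hx : a < x) : l ≤ f x :=
  le_of_tendsto hl <| by
    filter_upwards [Ioo_mem_nhdsGT hx] with y hy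
    exact hf hy.1 hx hy.2.le

theorem sub_le_sub_of_hasDerivAt_le_of_tendsto_nhdsGT {f g f' g' : ℝ → ℝ} {a lf lg x : ℝ}
    (hf : ∀ y, a < y → HasDerivAt f (f' y) y) (hg : ∀ y, a < y → HasDerivAt g (g' y) y)
    (hle : ∀ y, a < y → f' y ≤ g' y) (hfl : Tendsto f (𝓝[>] a) (𝓝 lf))
    (hgl : Tendsto g (𝓝[>] a) (𝓝 lg)) (hx : a < x) : f x - lf ≤ g x - lg := by
  have hderiv : ∀ y ∈ Ioi a, HasDerivAt (g - f) (g' y - f' y) y :=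
    fun y hy ↦ (hg y hy).sub (hf y hy)
  have hmono : MonotoneOn (g - f) (Ioi a) := by
    refine monotoneOn_of_hasDerivWithinAt_nonneg (f' := g' - f') (convex_Ioi a)
      (fun y hy ↦ (hderiv y hy).continuousAt.continuousWithinAt) ?_ ?_ <;>
      rw [interior_Ioi]
    · exact fun y hy ↦ (hderiv y hy).hasDerivWithinAt
    · exact fun y hy ↦ sub_nonneg.mpr (hle y hy)
  have hlim := hmono.le_of_tendsto_nhdsGT (hgl.sub hfl) hx
  simp only [Pi.sub_apply] at hlim
  linarith

/-- The radially outgoing null geodesics of the Schwarzschild metric with mass `-m` are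
`t = c + outgoingNullTime m r`. -/
noncomputable def outgoingNullTime (m r : ℝ) : ℝ :=
  r - 2 * m * Real.log (1 + r / (2 * m))

theorem hasDerivAt_outgoingNullTime {m r : ℝ} (hm : m ≠ 0) (hr : r + 2 * m ≠ 0) :
    HasDerivAt (outgoingNullTime m) (r / (r + 2 * m)) r := by
  have hsplit : 1 + r / (2 * m) = (r + 2 * m) / (2 * m) := by
    rw [one_add_div (by positivity), add_comm]
  have hlog := (((hasDerivAt_id' r).div_const (2 * m)).const_add 1).log
    (by rw [hsplit]; exact div_ne_zero hr (by positivity))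
  refine ((hasDerivAt_id' r).sub (hlog.const_mul (2 * m))).congr_deriv ?_
  rw [hsplit]
  field_simp
  ring

theorem tendsto_outgoingNullTime_zero (m : ℝ) : Tendsto (outgoingNullTime m) (𝓝 0) (𝓝 0) := by
  have hcont : ContinuousAt (outgoingNullTime m) 0 := by
    unfold outgoingNullTime
    fun_prop (disch := norm_num)
  simpa [outgoingNullTime] using hcont.tendsto

/-- Let `m > 0` and let `t̃ : (0, ∞) → ℝ` be a differentiable function satisfying
`|t̃'(r)| < r/(r + 2m)` for every `r > 0`, and let `L := lim_{r → 0⁺} t̃(r)`.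
Then for every `c > L` and every `r > 0` one has
`t̃(r) < c + r − 2m·log(1 + r/(2m))`; i.e., the graph `{(t̃(r), r) : r > 0}` is
disjoint from every radial null curve `{(c + r − 2m·log(1 + r/(2m)), r) : r > 0}`
with `c > L`, so some radially outgoing null geodesic emanating from `r = 0` never
intersects the putative Cauchy surface. -/
theorem null_geodesic_misses_putative_cauchy_surface (m : ℝ) (hm : 0 < m)
    (ttil ttil' : ℝ → ℝ) (L : ℝ)
    (hd : ∀ r : ℝ, 0 < r → HasDerivAt ttil (ttil' r) r)
    (hb : ∀ r : ℝ, 0 < r → |ttil' r| < r / (r + 2 * m))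
    (hL : Filter.Tendsto ttil (nhdsWithin 0 (Set.Ioi 0)) (nhds L)) :
    ∀ c : ℝ, L < c → ∀ r : ℝ, 0 < r →
      ttil r < c + r - 2 * m * Real.log (1 + r / (2 * m)) := by
  intro c hc r hr
  have hle := sub_le_sub_of_hasDerivAt_le_of_tendsto_nhdsGT hd
    (fun y hy ↦ hasDerivAt_outgoingNullTime hm.ne' (by positivity))
    (fun y hy ↦ (abs_lt.mp (hb y hy)).2.le) hL
    ((tendsto_outgoingNullTime_zero m).mono_left nhdsWithin_le_nhds) hr
  unfold outgoingNullTime at hle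
  linarith
end
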